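/- arXiv:2007.06830 — 3 statements merged into one kernel-verified Lean document; each statement's English description precedes it below -/
import Mathlib

section
/- Let 3 ≤ n < 8 be an integer and let m be a real number with 1 - √(2/n) ≤ m < min(2(n-2)/(3n), (n-2)/(n+2)). Set γ₃ = n(1-m)/(n-2-nm) - 1/m. Then (m/(1-m))(1+γ₃) < 1 and 2n > (n-2)/m. -/
theorem gamma3_inequalities (n : ℕ) (hn3 : 3 ≤ n) (hn8 : n < 8) (m : ℝ)
    (hm0 : 1 - Real.sqrt (2 / n) ≤ m)
    (hm1 : m < min (2 * ((n : ℝ) - 2) / (3 * n)) (((n : ℝ) - 2) / (n + 2)))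
    (γ₃ : ℝ)
    (hγ₃ : γ₃ = (n : ℝ) * (1 - m) / ((n : ℝ) - 2 - n * m) - 1 / m) :
    m / (1 - m) * (1 + γ₃) < 1 ∧ ((n : ℝ) - 2) / m < 2 * n := by
  have hN : (3:ℝ) ≤ (n:ℝ) := by exact_mod_cast hn3
  have hNpos : (0:ℝ) < n := by linarith
  have h2 : 2 / (n:ℝ) < (((n:ℝ)+2)/(2*n))^2 := by
    rw [div_pow, div_lt_div_iff₀ hNpos (by positivity)]
    nlinarith [sq_nonneg ((n:ℝ)-2)]
  have hkey : Real.sqrt (2/(n:ℝ)) < ((n:ℝ)+2)/(2*n) :=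
    (Real.sqrt_lt' (by positivity)).mpr h2
  have heq0 : ((n:ℝ)-2)/(2*n) = 1 - ((n:ℝ)+2)/(2*n) := by
    field_simp; ring
  have hm' : ((n:ℝ)-2)/(2*n) < m := by
    rw [heq0]; linarith
  have hmpos : 0 < m := lt_trans (div_pos (by linarith) (by positivity)) hm'
  have hm1a : m < 2*((n:ℝ)-2)/(3*n) := hm1.trans_le (min_le_left _ _)
  have hm1b : m < ((n:ℝ)-2)/((n:ℝ)+2) := hm1.trans_le (min_le_right _ _)
  have hm1' : m < 1 := by
    refine hm1b.trans ?_
    rw [div_lt_one (by linarith)]; linarith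
  have h1m : (0:ℝ) < 1 - m := by linarith
  have hm1a' : m * (3*n) < 2*((n:ℝ)-2) := (lt_div_iff₀ (by positivity)).mp hm1a
  have hden : (0:ℝ) < (n:ℝ) - 2 - n * m := by nlinarith
  constructor
  · have heq : m/(1-m)*(1+γ₃) = (n:ℝ)*m/((n:ℝ)-2-n*m) - 1 := by
      rw [hγ₃]; field_simp; ring
    rw [heq]
    have : (n:ℝ)*m/((n:ℝ)-2-n*m) < 2 := by
      rw [div_lt_iff₀ hden]; nlinarith
    linarith
  · rw [div_lt_iff₀ hmpos]
    have := (div_lt_iff₀ (by positivity : (0:ℝ) < 2*n)).mp hm'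
    linarith
end

section
/- Let n ≥ 3, 0 < m < (n-2)/n, and suppose f : (0,∞) → (0,∞) is twice continuously differentiable and satisfies ((n-1)/m)((fᵐ)'' + ((n-1)/r)(fᵐ)') + α f + β r f' = 0 on (0,∞), where β < 0 and α = 2β/(1-m). Define g(r) := r^{-(n-2)/m} f(1/r) for r > 0. Then g is positive and satisfies ((n-1)/m)((gᵐ)'' + ((n-1)/r)(gᵐ)') + r^{(n-2)/m - n - 2}(α̃ g + β̃ r g') = 0 on (0,∞), where α̃ = α - ((n-2)/m)β and β̃ = -β. -/
/-!
The substitution `g(r) = r^{-(n-2)/m} f(1/r)` makes `gᵐ` the radial Kelvin transform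
`r^{2-n} fᵐ(1/r)` of `fᵐ`, and the Kelvin transform intertwines the radial Laplacian:
`Δ(r^{2-n} F(1/r)) = r^{-n-2} (ΔF)(1/r)`. The first-order terms pick up the same factor
`r^{-n-2}` once multiplied by `r^{(n-2)/m-n-2}`; differentiating the power `r^{-(n-2)/m}` is
what shifts `α` to `α̃`. Hence the equation for `g` at `r` is `r^{-n-2}` times the equation
for `f` at `1/r`.
-/

open Set

theorem hasDerivAt_rpow_mul_comp_inv {f : ℝ → ℝ} {r : ℝ} (p : ℝ) (hr : 0 < r)
    (hf : DifferentiableAt ℝ f r⁻¹) :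
    HasDerivAt (fun y => y ^ p * f y⁻¹)
      (p * r ^ (p - 1) * f r⁻¹ - r ^ (p - 2) * deriv f r⁻¹) r := by
  refine ((Real.hasDerivAt_rpow_const (Or.inl hr.ne')).mul
    (hf.hasDerivAt.comp r (hasDerivAt_inv hr.ne'))).congr_deriv ?_
  rw [Real.rpow_sub hr p 2, Real.rpow_two]
  simp only [Function.comp_apply]
  ring

noncomputable def radialLaplacian (d : ℝ) (F : ℝ → ℝ) (r : ℝ) : ℝ :=
  deriv (deriv F) r + (d - 1) / r * deriv F r

theorem radialLaplacian_kelvin (d : ℝ) {F G : ℝ → ℝ} (hF : ContDiffOn ℝ 2 F (Ioi 0))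
    (hG : EqOn G (fun y => y ^ (2 - d) * F y⁻¹) (Ioi 0)) {r : ℝ} (hr : 0 < r) :
    radialLaplacian d G r = r ^ (-d - 2) * radialLaplacian d F r⁻¹ := by
  have hF1 : ∀ y ∈ Ioi (0 : ℝ), DifferentiableAt ℝ F y := fun y hy =>
    (hF.contDiffAt (Ioi_mem_nhds hy)).differentiableAt two_ne_zero
  have hF2 : ∀ y ∈ Ioi (0 : ℝ), DifferentiableAt ℝ (deriv F) y := fun y hy =>
    ((hF.deriv_of_isOpen isOpen_Ioi (m := 1) (by norm_num)).contDiffAt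
      (Ioi_mem_nhds hy)).differentiableAt one_ne_zero
  set p := 2 - d
  -- `G'` is again a combination of terms `y ^ q * H y⁻¹`, so the same rule differentiates it.
  have hG' : EqOn (deriv G)
      (fun y => p * (y ^ (p - 1) * F y⁻¹) - y ^ (p - 2) * deriv F y⁻¹) (Ioi 0) :=
    fun y (hy : 0 < y) =>
      ((hG.eventuallyEq_of_mem (Ioi_mem_nhds hy)).deriv_eq.trans
        (hasDerivAt_rpow_mul_comp_inv p hy (hF1 _ (inv_pos.mpr hy))).deriv).trans (by ring)
  have hG'' : HasDerivAt (deriv G) _ r :=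
    (((hasDerivAt_rpow_mul_comp_inv (p - 1) hr (hF1 _ (inv_pos.mpr hr))).const_mul p).sub
      (hasDerivAt_rpow_mul_comp_inv (p - 2) hr (hF2 _ (inv_pos.mpr hr)))).congr_of_eventuallyEq
      (hG'.eventuallyEq_of_mem (Ioi_mem_nhds hr))
  unfold radialLaplacian
  rw [hG''.deriv, hG' hr, show -d - 2 = p - 4 by ring]
  simp only [Real.rpow_sub hr, Real.rpow_one, Real.rpow_ofNat]
  field_simp
  ring

theorem scaling_terms_rpow_mul_comp_inv (p α β : ℝ) {f g : ℝ → ℝ} {r : ℝ} (hr : 0 < r)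
    (hf : DifferentiableAt ℝ f r⁻¹) (hg : EqOn g (fun y => y ^ p * f y⁻¹) (Ioi 0)) :
    r ^ (-p) * ((α + p * β) * g r - β * r * deriv g r) =
      α * f r⁻¹ + β * r⁻¹ * deriv f r⁻¹ := by
  rw [((hasDerivAt_rpow_mul_comp_inv p hr hf).congr_of_eventuallyEq
    (hg.eventuallyEq_of_mem (Ioi_mem_nhds hr))).deriv, hg hr,
    Real.rpow_neg hr.le, Real.rpow_sub hr, Real.rpow_sub hr, Real.rpow_one, Real.rpow_two]
  have : r ^ p ≠ 0 := (Real.rpow_pos_of_pos hr p).ne'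
  field_simp
  ring

theorem inversion_of_selfsimilar_profile_general (n : ℕ) (m β α : ℝ)
    (hm0 : 0 < m)
    (f : ℝ → ℝ)
    (hf_pos : ∀ r ∈ Ioi (0 : ℝ), 0 < f r)
    (hf_reg : ContDiffOn ℝ 2 f (Ioi (0 : ℝ)))
    (hf_ode : ∀ r ∈ Ioi (0 : ℝ),
      ((n : ℝ) - 1) / m *
          (deriv (deriv (fun s => f s ^ m)) r +
            ((n : ℝ) - 1) / r * deriv (fun s => f s ^ m) r) +
        α * f r + β * r * deriv f r = 0)
    (g : ℝ → ℝ)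
    (hg_def : ∀ r ∈ Ioi (0 : ℝ), g r = r ^ (-((n : ℝ) - 2) / m) * f r⁻¹)
    (αt βt : ℝ)
    (hαt : αt = α - ((n : ℝ) - 2) / m * β) (hβt : βt = -β) :
    ∀ r ∈ Ioi (0 : ℝ), 0 < g r ∧
      ((n : ℝ) - 1) / m *
          (deriv (deriv (fun s => g s ^ m)) r +
            ((n : ℝ) - 1) / r * deriv (fun s => g s ^ m) r) +
        r ^ (((n : ℝ) - 2) / m - n - 2) * (αt * g r + βt * r * deriv g r) = 0 := by
  intro r (hr : 0 < r)
  have hr' : 0 < r⁻¹ := inv_pos.mpr hr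
  refine ⟨hg_def r hr ▸ mul_pos (Real.rpow_pos_of_pos hr _) (hf_pos _ hr'), ?_⟩
  have hF : ContDiffOn ℝ 2 (fun s => f s ^ m) (Ioi 0) := fun x hx =>
    (hf_reg x hx).rpow_const_of_ne (hf_pos x hx).ne'
  have hgm : EqOn (fun s => g s ^ m) (fun y => y ^ (2 - (n : ℝ)) * f y⁻¹ ^ m) (Ioi 0) :=
    fun y (hy : 0 < y) => by
      dsimp only
      rw [hg_def y hy, Real.mul_rpow (Real.rpow_nonneg hy.le _) (hf_pos _ (inv_pos.mpr hy)).le,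
        ← Real.rpow_mul hy.le, div_mul_cancel₀ _ hm0.ne', neg_sub]
  have hlap := radialLaplacian_kelvin n hF hgm hr
  have hscal := scaling_terms_rpow_mul_comp_inv (-((n : ℝ) - 2) / m) α β hr
    ((hf_reg.contDiffAt (Ioi_mem_nhds hr')).differentiableAt two_ne_zero)
    (fun y hy => hg_def y hy)
  have hexp : r ^ (((n : ℝ) - 2) / m - n - 2) =
      r ^ (-(n : ℝ) - 2) * r ^ (-(-((n : ℝ) - 2) / m)) := by
    rw [← Real.rpow_add hr]
    ring_nf
  unfold radialLaplacian at hlap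
  rw [hlap, hexp, hαt, hβt]
  linear_combination r ^ (-(n : ℝ) - 2) * (hf_ode r⁻¹ hr' + hscal)

theorem inversion_of_selfsimilar_profile (n : ℕ) (hn : 3 ≤ n) (m β α : ℝ)
    (hm0 : 0 < m) (hm1 : m < ((n : ℝ) - 2) / n) (hβ : β < 0)
    (hα : α = 2 * β / (1 - m))
    (f : ℝ → ℝ)
    (hf_pos : ∀ r ∈ Ioi (0 : ℝ), 0 < f r)
    (hf_reg : ContDiffOn ℝ 2 f (Ioi (0 : ℝ)))
    (hf_ode : ∀ r ∈ Ioi (0 : ℝ),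
      ((n : ℝ) - 1) / m *
          (deriv (deriv (fun s => f s ^ m)) r +
            ((n : ℝ) - 1) / r * deriv (fun s => f s ^ m) r) +
        α * f r + β * r * deriv f r = 0)
    (g : ℝ → ℝ)
    (hg_def : ∀ r ∈ Ioi (0 : ℝ), g r = r ^ (-((n : ℝ) - 2) / m) * f r⁻¹)
    (αt βt : ℝ)
    (hαt : αt = α - ((n : ℝ) - 2) / m * β) (hβt : βt = -β) :
    ∀ r ∈ Ioi (0 : ℝ), 0 < g r ∧
      ((n : ℝ) - 1) / m *
          (deriv (deriv (fun s => g s ^ m)) r +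
            ((n : ℝ) - 1) / r * deriv (fun s => g s ^ m) r) +
        r ^ (((n : ℝ) - 2) / m - n - 2) * (αt * g r + βt * r * deriv g r) = 0 :=
  inversion_of_selfsimilar_profile_general n m β α hm0 f hf_pos hf_reg hf_ode g hg_def αt βt hαt hβt
end

section
/- Let a > 0 and b ∈ ℝ, and let h : [s₀,∞) → ℝ be twice continuously differentiable with h(s)/s → 0 as s → ∞. Suppose there exist constants B ∈ ℝ and ε-approximations such that for every ε > 0 there is s₁ ≥ s₀ with B - ε ≤ h''(s) + (2a s + b·h(s) + d) h'(s) ≤ B + ε for all s ≥ s₁ (with d ∈ ℝ fixed). Then lim_{s→∞} s h'(s) = B/(2a). -/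
/-! With the integrating factor `ψ s = exp (a s² + b ∫ h + d s)` one has `ψ' = ψ P` for
`P s = 2 a s + b h s + d`, hence `(ψ h')' = ψ (h'' + P h') ≈ B ψ`, while
`(ψ / s)' = ψ (P / s - 1 / s²) ≈ 2 a ψ`.
Since `∫ h = o(s²)`, `ψ / s → ∞`, and l'Hôpital's rule in the form `∞ / ∞` gives
`s h' = ψ h' / (ψ / s) → B / (2 a)`. -/

open Filter Topology Set

section LHopital

variable {f g f' g' : ℝ → ℝ}

theorem eventually_div_lt_of_deriv_div_lt {c c' : ℝ}
    (hf : ∀ᶠ x in atTop, HasDerivAt f (f' x) x) (hg : ∀ᶠ x in atTop, HasDerivAt g (g' x) x)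
    (hg' : ∀ᶠ x in atTop, 0 < g' x) (hg_top : Tendsto g atTop atTop)
    (hc : ∀ᶠ x in atTop, f' x / g' x < c) (hcc' : c < c') :
    ∀ᶠ x in atTop, f x / g x < c' := by
  obtain ⟨T, hT⟩ := eventually_atTop.1 (hf.and (hg.and (hg'.and hc)))
  have hmono : MonotoneOn (fun x => c * g x - f x) (Ici T) := by
    have hderiv : ∀ x ∈ Ici T, HasDerivAt (fun x => c * g x - f x) (c * g' x - f' x) x :=
      fun x hx => ((hT x hx).2.1.const_mul c).sub (hT x hx).1
    refine monotoneOn_of_hasDerivWithinAt_nonneg (convex_Ici T)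
      (fun x hx => (hderiv x hx).continuousAt.continuousWithinAt)
      (fun x hx => (hderiv x (interior_subset hx)).hasDerivWithinAt) fun x hx => ?_
    obtain ⟨-, -, hpos, hlt⟩ := hT x (interior_subset hx)
    rw [div_lt_iff₀ hpos] at hlt
    linarith
  have hrem : Tendsto (fun x => c + (f T - c * g T) / g x) atTop (𝓝 c) := by
    simpa using (tendsto_const_nhds.div_atTop hg_top).const_add c
  filter_upwards [eventually_ge_atTop T, hg_top.eventually_gt_atTop 0,
    hrem.eventually (gt_mem_nhds hcc')] with x hxT hgx hx
  calc f x / g x ≤ c + (f T - c * g T) / g x := by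
        rw [div_le_iff₀ hgx, add_mul, div_mul_cancel₀ _ hgx.ne']
        linarith [hmono self_mem_Ici hxT hxT]
    _ < c' := hx

theorem lhopital_atTop_atTop {L : ℝ}
    (hf : ∀ᶠ x in atTop, HasDerivAt f (f' x) x) (hg : ∀ᶠ x in atTop, HasDerivAt g (g' x) x)
    (hg' : ∀ᶠ x in atTop, 0 < g' x) (hg_top : Tendsto g atTop atTop)
    (hlim : Tendsto (fun x => f' x / g' x) atTop (𝓝 L)) :
    Tendsto (fun x => f x / g x) atTop (𝓝 L) := by
  refine tendsto_order.2 ⟨fun c' hc' => ?_, fun c' hc' => ?_⟩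
  · obtain ⟨c, hc'c, hcL⟩ := exists_between hc'
    have hneg := eventually_div_lt_of_deriv_div_lt (f := -f) (f' := -f') (c := -c)
      (hf.mono fun x hx => hx.neg) hg hg' hg_top
      ((hlim.eventually (lt_mem_nhds hcL)).mono fun x hx => by
        simpa only [Pi.neg_apply, neg_div, neg_lt_neg_iff] using hx)
      (neg_lt_neg hc'c)
    filter_upwards [hneg] with x hx
    simpa only [Pi.neg_apply, neg_div, neg_lt_neg_iff] using hx
  · obtain ⟨c, hLc, hcc'⟩ := exists_between hc'
    exact eventually_div_lt_of_deriv_div_lt hf hg hg' hg_top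
      (hlim.eventually (gt_mem_nhds hLc)) hcc'

end LHopital

theorem tendsto_div_sq_of_hasDerivAt {F f : ℝ → ℝ}
    (hF : ∀ᶠ s in atTop, HasDerivAt F (f s) s)
    (hf : Tendsto (fun s => f s / s) atTop (𝓝 0)) :
    Tendsto (fun s => F s / s ^ 2) atTop (𝓝 0) := by
  refine lhopital_atTop_atTop (g' := fun s => 2 * s) hF
    (Eventually.of_forall fun s => by simpa using hasDerivAt_pow 2 s)
    ((eventually_gt_atTop 0).mono fun s hs => by positivity) (tendsto_pow_atTop two_ne_zero) ?_
  simpa using (hf.div_const 2).congr fun s => by ring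

theorem tendsto_exp_div_atTop_of_div_sq {q : ℝ → ℝ} {a : ℝ} (ha : 0 < a)
    (hq : Tendsto (fun s => q s / s ^ 2) atTop (𝓝 a)) :
    Tendsto (fun s => Real.exp (q s) / s) atTop atTop := by
  refine tendsto_atTop_mono' atTop ?_ (tendsto_id.const_mul_atTop (half_pos ha))
  filter_upwards [hq.eventually (lt_mem_nhds (half_lt_self ha)), eventually_gt_atTop 0]
    with s hq hs
  rw [lt_div_iff₀ (by positivity)] at hq
  rw [id, le_div_iff₀ hs]
  nlinarith [Real.add_one_le_exp (q s)]

theorem ContinuousOn.hasDerivAt_integral_of_Ici {E : Type*} [NormedAddCommGroup E]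
    [NormedSpace ℝ E] [CompleteSpace E] {f : ℝ → E} {a x : ℝ}
    (hf : ContinuousOn f (Ici a)) (hx : a < x) :
    HasDerivAt (fun s => ∫ t in a..s, f t) (f x) x :=
  intervalIntegral.integral_hasDerivAt_right
    (hf.mono Icc_subset_Ici_self |>.intervalIntegrable_of_Icc hx.le)
    (hf.stronglyMeasurableAtFilter_nhdsWithin measurableSet_Ici x |>.filter_mono
      (nhdsWithin_eq_nhds.2 (Ici_mem_nhds hx)).ge)
    (hf.continuousAt (Ici_mem_nhds hx))

theorem tendsto_exp_quadratic_add_integral_div_atTop {f : ℝ → ℝ} {s₀ a : ℝ} (b d : ℝ)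
    (ha : 0 < a) (hf : ContinuousOn f (Ici s₀))
    (hf_sub : Tendsto (fun s => f s / s) atTop (𝓝 0)) :
    Tendsto (fun s => Real.exp (a * s ^ 2 + b * (∫ t in s₀..s, f t) + d * s) / s)
      atTop atTop := by
  have hF := tendsto_div_sq_of_hasDerivAt
    ((eventually_gt_atTop s₀).mono fun s hs => hf.hasDerivAt_integral_of_Ici hs) hf_sub
  have hlim := ((hF.const_mul b).add (tendsto_inv_atTop_zero.const_mul d)).const_add a
  rw [mul_zero, mul_zero, add_zero, add_zero] at hlim
  refine tendsto_exp_div_atTop_of_div_sq ha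
    (hlim.congr' ((eventually_gt_atTop 0).mono fun s hs => ?_))
  field_simp
  ring

theorem tendsto_mul_of_integratingFactor {v v' ψ P : ℝ → ℝ} {c B : ℝ} (hc : 0 < c)
    (hv : ∀ᶠ s in atTop, HasDerivAt v (v' s) s)
    (hψ : ∀ᶠ s in atTop, HasDerivAt ψ (ψ s * P s) s)
    (hψ_top : Tendsto (fun s => ψ s / s) atTop atTop)
    (hP : Tendsto (fun s => P s / s) atTop (𝓝 c))
    (hB : Tendsto (fun s => v' s + P s * v s) atTop (𝓝 B)) :
    Tendsto (fun s => s * v s) atTop (𝓝 (B / c)) := by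
  set m : ℝ → ℝ := fun s => P s / s - (s ^ 2)⁻¹
  have hm : Tendsto m atTop (𝓝 c) := by
    simpa using hP.sub (tendsto_pow_atTop two_ne_zero).inv_tendsto_atTop
  have hpos : ∀ᶠ s in atTop, 0 < s ∧ 0 < ψ s ∧ 0 < m s := by
    filter_upwards [eventually_gt_atTop 0, hψ_top.eventually_gt_atTop 0,
      hm.eventually_const_lt hc] with s hs hψs hms
    exact ⟨hs, (div_pos_iff_of_pos_right hs).1 hψs, hms⟩
  have hG : ∀ᶠ s in atTop, HasDerivAt (fun s => ψ s * v s) (ψ s * (v' s + P s * v s)) s := by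
    filter_upwards [hv, hψ] with s hvs hψs
    exact (hψs.mul hvs).congr_deriv (by ring)
  have hF : ∀ᶠ s in atTop, HasDerivAt (fun s => ψ s / s) (ψ s * m s) s := by
    filter_upwards [hψ, eventually_gt_atTop 0] with s hψs hs
    refine (hψs.div (hasDerivAt_id s) hs.ne').congr_deriv ?_
    simp only [m, id]
    field_simp
  have hratio : Tendsto (fun s => ψ s * (v' s + P s * v s) / (ψ s * m s)) atTop (𝓝 (B / c)) :=
    (hB.div hm hc.ne').congr' (hpos.mono fun s hs => (mul_div_mul_left _ _ hs.2.1.ne').symm)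
  refine (lhopital_atTop_atTop hG hF (hpos.mono fun s hs => mul_pos hs.2.1 hs.2.2) hψ_top
    hratio).congr' (hpos.mono fun s hs => ?_)
  show ψ s * v s / (ψ s / s) = s * v s
  field_simp [hs.1.ne', hs.2.1.ne']

theorem integrating_factor_limit (a b d B s₀ : ℝ) (ha : 0 < a)
    (h : ℝ → ℝ)
    (hreg : ContDiffOn ℝ 2 h (Set.Ici s₀))
    (hsublinear : Tendsto (fun s => h s / s) atTop (nhds 0))
    (happrox : ∀ ε > (0 : ℝ), ∃ s₁, s₀ ≤ s₁ ∧ ∀ s ≥ s₁,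
      B - ε ≤ deriv (deriv h) s + (2 * a * s + b * h s + d) * deriv h s ∧
      deriv (deriv h) s + (2 * a * s + b * h s + d) * deriv h s ≤ B + ε) :
    Tendsto (fun s => s * deriv h s) atTop (nhds (B / (2 * a))) := by
  have hdiff : DifferentiableOn ℝ (deriv h) (Ioi s₀) :=
    ((hreg.mono Ioi_subset_Ici_self).deriv_of_isOpen (m := 1) isOpen_Ioi
      (by norm_num)).differentiableOn one_ne_zero
  set H : ℝ → ℝ := fun s => ∫ t in s₀..s, h t
  have hH : ∀ᶠ s in atTop, HasDerivAt H (h s) s :=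
    (eventually_gt_atTop s₀).mono fun s hs => hreg.continuousOn.hasDerivAt_integral_of_Ici hs
  have hP : Tendsto (fun s => (2 * a * s + b * h s + d) / s) atTop (𝓝 (2 * a)) := by
    have hlim := ((hsublinear.const_mul b).add (tendsto_inv_atTop_zero.const_mul d)).const_add
      (2 * a)
    rw [mul_zero, mul_zero, add_zero, add_zero] at hlim
    refine hlim.congr' ((eventually_gt_atTop 0).mono fun s hs => ?_)
    field_simp
    ring
  have hψ : ∀ᶠ s in atTop, HasDerivAt (fun s => Real.exp (a * s ^ 2 + b * H s + d * s))
      (Real.exp (a * s ^ 2 + b * H s + d * s) * (2 * a * s + b * h s + d)) s := by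
    filter_upwards [hH] with s hHs
    refine ((((hasDerivAt_pow 2 s).const_mul a).add (hHs.const_mul b)).add
      ((hasDerivAt_id s).const_mul d)).exp.congr_deriv ?_
    simp only [Pi.add_apply, id, Nat.cast_ofNat, Nat.add_one_sub_one, pow_one, mul_one]
    ring
  have hB : Tendsto (fun s => deriv (deriv h) s + (2 * a * s + b * h s + d) * deriv h s)
      atTop (𝓝 B) := by
    refine Metric.tendsto_nhds.2 fun ε hε => ?_
    obtain ⟨s₁, -, hs₁⟩ := happrox (ε / 2) (half_pos hε)
    filter_upwards [eventually_ge_atTop s₁] with s hs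
    rw [Real.dist_eq, abs_sub_lt_iff]
    constructor <;> linarith [hs₁ s hs]
  exact tendsto_mul_of_integratingFactor (by positivity)
    ((eventually_gt_atTop s₀).mono fun s hs =>
      (hdiff.differentiableAt (Ioi_mem_nhds hs)).hasDerivAt) hψ
    (tendsto_exp_quadratic_add_integral_div_atTop b d ha hreg.continuousOn hsublinear) hP hB
end
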